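/- Let X and Y be Polish spaces and let c = d^p where d is a pseudo-metric on X × Y and p ≥ 1. Let γ and γ' be probability measures on X × Y with marginals (μ, ν) and (μ', ν') respectively, such that τ_c(γ) < ∞ and τ_c(γ') < ∞. Then |τ_c(γ)^{1/p} − τ_c(γ')^{1/p}| ≤ T_c(γ, γ')^{1/p} + T_c(μ ⊗ ν, μ' ⊗ ν')^{1/p}. -/

import Mathlib

open MeasureTheory ENNReal Filter Topology

/-- The optimal transport cost between two measures `μ` and `ν` on a space `Z`
with base cost `c`. -/
noncomputable def otCost {Z : Type*} [MeasurableSpace Z]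
    (c : Z → Z → ℝ≥0∞) (μ ν : Measure Z) : ℝ≥0∞ :=
  ⨅ (π : Measure (Z × Z)) (_ : π.map Prod.fst = μ ∧ π.map Prod.snd = ν),
    ∫⁻ p, c p.1 p.2 ∂π

/-- The transport dependency of a measure `γ` on `X × Y`. -/
noncomputable def tdep {X Y : Type*} [MeasurableSpace X] [MeasurableSpace Y]
    (c : X × Y → X × Y → ℝ≥0∞) (γ : Measure (X × Y)) : ℝ≥0∞ :=
  otCost c γ ((γ.map Prod.fst).prod (γ.map Prod.snd))

/-!
Raising the optimal cost for `d ^ p` to the power `1 / p` gives a pseudo-metric on finite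
measures. Its triangle inequality comes from gluing a coupling of `(μ, ν)` and one of `(ν, κ)`
along their common marginal `ν` (disintegration, available on standard Borel spaces) and applying
Minkowski's inequality to `d x z ≤ d x y + d y z`. The bound is then the reverse triangle
inequality of this pseudo-metric for the four measures `γ`, `γ'`, `μ ⊗ ν` and `μ' ⊗ ν'`.
-/

open ProbabilityTheory

theorem MeasureTheory.Measure.exists_map_prodMap_fst_eq_and_map_prodMap_snd_eq
    {Y X W : Type*} [MeasurableSpace Y] [MeasurableSpace X] [MeasurableSpace W]
    [StandardBorelSpace X] [Nonempty X] [StandardBorelSpace W] [Nonempty W]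
    (ρ : Measure (Y × X)) (π : Measure (Y × W)) [IsFiniteMeasure ρ] [IsFiniteMeasure π]
    (h : ρ.fst = π.fst) :
    ∃ θ : Measure (Y × X × W),
      θ.map (Prod.map id Prod.fst) = ρ ∧ θ.map (Prod.map id Prod.snd) = π := by
  refine ⟨π.fst ⊗ₘ (ρ.condKernel ×ₖ π.condKernel), ?_, ?_⟩
  · rw [← Measure.compProd_map measurable_fst, ← Kernel.fst_eq, Kernel.fst_prod, ← h,
      Measure.disintegrate]
  · rw [← Measure.compProd_map measurable_snd, ← Kernel.snd_eq, Kernel.snd_prod,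
      Measure.disintegrate]

section
variable {Z : Type*} [MeasurableSpace Z] {c : Z → Z → ℝ≥0∞} {μ ν : Measure Z}

theorem otCost_le_lintegral (π : Measure (Z × Z)) (h₁ : π.map Prod.fst = μ)
    (h₂ : π.map Prod.snd = ν) : otCost c μ ν ≤ ∫⁻ q, c q.1 q.2 ∂π :=
  iInf₂_le π ⟨h₁, h₂⟩

theorem otCost_rpow {r : ℝ} (hr : 0 < r) :
    otCost c μ ν ^ r = ⨅ (π : Measure (Z × Z)) (_ : π.map Prod.fst = μ ∧ π.map Prod.snd = ν),
      (∫⁻ q, c q.1 q.2 ∂π) ^ r := by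
  simp only [otCost, ← ENNReal.orderIsoRpow_apply r hr, OrderIso.map_iInf]

theorem otCost_comm (hc : ∀ a b, c a b = c b a) (μ ν : Measure Z) :
    otCost c μ ν = otCost c ν μ := by
  suffices h : ∀ μ ν : Measure Z, otCost c ν μ ≤ otCost c μ ν from le_antisymm (h ν μ) (h μ ν)
  intro μ ν
  refine le_iInf₂ fun π ⟨h₁, h₂⟩ => ?_
  calc otCost c ν μ ≤ ∫⁻ q, c q.1 q.2 ∂(π.map Prod.swap) :=
        otCost_le_lintegral _ (by rw [Measure.map_map measurable_fst measurable_swap]; exact h₂)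
          (by rw [Measure.map_map measurable_snd measurable_swap]; exact h₁)
    _ = ∫⁻ q, c q.1 q.2 ∂π :=
        (lintegral_map_equiv _ MeasurableEquiv.prodComm).trans
          (lintegral_congr fun q => hc _ _)
end

noncomputable def wasserstein {Z : Type*} [MeasurableSpace Z] (p : ℝ) (d : Z → Z → ℝ≥0∞)
    (μ ν : Measure Z) : ℝ≥0∞ :=
  otCost (fun a b => d a b ^ p) μ ν ^ (1 / p)

theorem wasserstein_comm {Z : Type*} [MeasurableSpace Z] {p : ℝ} {d : Z → Z → ℝ≥0∞}
    (hsymm : ∀ a b, d a b = d b a) (μ ν : Measure Z) :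
    wasserstein p d μ ν = wasserstein p d ν μ := by
  rw [wasserstein, otCost_comm fun a b => by rw [hsymm a b], wasserstein]

section
variable {Z : Type*} [MeasurableSpace Z] [StandardBorelSpace Z] [Nonempty Z]
  {p : ℝ} {d : Z → Z → ℝ≥0∞}

theorem wasserstein_le_lintegral_add (hp : 1 ≤ p) (hd : Measurable (Function.uncurry d))
    (htri : ∀ a b c, d a c ≤ d a b + d b c) {μ ν κ : Measure Z} [IsFiniteMeasure ν]
    {π₁ π₂ : Measure (Z × Z)} (h₁ : π₁.map Prod.fst = μ ∧ π₁.map Prod.snd = ν)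
    (h₂ : π₂.map Prod.fst = ν ∧ π₂.map Prod.snd = κ) :
    wasserstein p d μ κ
      ≤ (∫⁻ q, d q.1 q.2 ^ p ∂π₁) ^ (1 / p) + (∫⁻ q, d q.1 q.2 ^ p ∂π₂) ^ (1 / p) := by
  have : IsFiniteMeasure π₁ := by
    rw [← Measure.isFiniteMeasure_map_iff measurable_snd.aemeasurable, h₁.2]; infer_instance
  have : IsFiniteMeasure π₂ := by
    rw [← Measure.isFiniteMeasure_map_iff measurable_fst.aemeasurable, h₂.1]; infer_instance
  obtain ⟨θ, hθ₁, hθ₂⟩ := Measure.exists_map_prodMap_fst_eq_and_map_prodMap_snd_eq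
    (π₁.map Prod.swap) π₂ (by
      rw [Measure.fst, Measure.fst, Measure.map_map measurable_fst measurable_swap, h₂.1]
      exact h₁.2)
  have hθ_fst : (θ.map Prod.snd).map Prod.fst = μ := by
    rw [Measure.map_map measurable_fst measurable_snd,
      show Prod.fst ∘ Prod.snd = Prod.snd ∘ Prod.map (id : Z → Z) (Prod.fst : Z × Z → Z) from rfl,
      ← Measure.map_map measurable_snd (measurable_id.prodMap measurable_fst), hθ₁,
      Measure.map_map measurable_snd measurable_swap]
    exact h₁.1
  have hθ_snd : (θ.map Prod.snd).map Prod.snd = κ := by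
    rw [Measure.map_map measurable_snd measurable_snd,
      show Prod.snd ∘ Prod.snd = Prod.snd ∘ Prod.map (id : Z → Z) (Prod.snd : Z × Z → Z) from rfl,
      ← Measure.map_map measurable_snd (measurable_id.prodMap measurable_snd), hθ₂]
    exact h₂.2
  have hc : Measurable fun q : Z × Z => d q.1 q.2 ^ p := hd.pow_const p
  have hc_swap : Measurable fun q : Z × Z => d q.2 q.1 ^ p :=
    (hd.comp measurable_swap).pow_const p
  have hcost₁ : ∫⁻ ω, d ω.2.1 ω.1 ^ p ∂θ = ∫⁻ q, d q.1 q.2 ^ p ∂π₁ :=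
    calc ∫⁻ ω, d ω.2.1 ω.1 ^ p ∂θ
        = ∫⁻ q, d q.2 q.1 ^ p ∂(π₁.map Prod.swap) := by
          rw [← hθ₁]; exact (lintegral_map hc_swap (measurable_id.prodMap measurable_fst)).symm
      _ = ∫⁻ q, d q.1 q.2 ^ p ∂π₁ := lintegral_map hc_swap measurable_swap
  have hcost₂ : ∫⁻ ω, d ω.1 ω.2.2 ^ p ∂θ = ∫⁻ q, d q.1 q.2 ^ p ∂π₂ := by
    rw [← hθ₂]; exact (lintegral_map hc (measurable_id.prodMap measurable_snd)).symm
  have hr : 0 ≤ 1 / p := by positivity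
  calc wasserstein p d μ κ
      ≤ (∫⁻ q, d q.1 q.2 ^ p ∂(θ.map Prod.snd)) ^ (1 / p) :=
        ENNReal.rpow_le_rpow (otCost_le_lintegral _ hθ_fst hθ_snd) hr
    _ = (∫⁻ ω, d ω.2.1 ω.2.2 ^ p ∂θ) ^ (1 / p) := by rw [lintegral_map hc measurable_snd]
    _ ≤ (∫⁻ ω, (d ω.2.1 ω.1 + d ω.1 ω.2.2) ^ p ∂θ) ^ (1 / p) := by
        gcongr with ω
        exact htri _ _ _
    _ ≤ (∫⁻ ω, d ω.2.1 ω.1 ^ p ∂θ) ^ (1 / p) + (∫⁻ ω, d ω.1 ω.2.2 ^ p ∂θ) ^ (1 / p) :=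
        ENNReal.lintegral_Lp_add_le
          (hd.comp (measurable_snd.fst.prodMk measurable_fst)).aemeasurable
          (hd.comp (measurable_fst.prodMk measurable_snd.snd)).aemeasurable hp
    _ = _ := by rw [hcost₁, hcost₂]

theorem wasserstein_triangle (hp : 1 ≤ p) (hd : Measurable (Function.uncurry d))
    (htri : ∀ a b c, d a c ≤ d a b + d b c) (μ ν κ : Measure Z) [IsFiniteMeasure ν] :
    wasserstein p d μ κ ≤ wasserstein p d μ ν + wasserstein p d ν κ := by
  have hr : 0 < 1 / p := by positivity
  unfold wasserstein
  rw [otCost_rpow (μ := μ) (ν := ν) hr, otCost_rpow (μ := ν) (ν := κ) hr]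
  simp only [ENNReal.iInf_add, ENNReal.add_iInf]
  exact le_iInf₂ fun π₂ h₂ => le_iInf₂ fun π₁ h₁ =>
    wasserstein_le_lintegral_add hp hd htri h₁ h₂

theorem max_tsub_wasserstein_le (hp : 1 ≤ p) (hd : Measurable (Function.uncurry d))
    (hsymm : ∀ a b, d a b = d b a) (htri : ∀ a b c, d a c ≤ d a b + d b c)
    (μ ν μ' ν' : Measure Z) [IsFiniteMeasure μ] [IsFiniteMeasure ν]
    [IsFiniteMeasure μ'] [IsFiniteMeasure ν'] :
    max (wasserstein p d μ ν - wasserstein p d μ' ν') (wasserstein p d μ' ν' - wasserstein p d μ ν)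
      ≤ wasserstein p d μ μ' + wasserstein p d ν ν' := by
  have tri := wasserstein_triangle hp hd htri
  have comm := wasserstein_comm (p := p) hsymm
  refine max_le (tsub_le_iff_right.2 ?_) (tsub_le_iff_right.2 ?_)
  · calc wasserstein p d μ ν
        ≤ wasserstein p d μ μ' + (wasserstein p d μ' ν' + wasserstein p d ν' ν) :=
          (tri μ μ' ν).trans (by gcongr; exact tri μ' ν' ν)
      _ = wasserstein p d μ μ' + wasserstein p d ν ν' + wasserstein p d μ' ν' := by
          rw [comm ν']; ring
  · calc wasserstein p d μ' ν'
        ≤ wasserstein p d μ' μ + (wasserstein p d μ ν + wasserstein p d ν ν') :=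
          (tri μ' μ ν').trans (by gcongr; exact tri μ ν ν')
      _ = wasserstein p d μ μ' + wasserstein p d ν ν' + wasserstein p d μ ν := by
          rw [comm μ']; ring
end

theorem tdep_rpow_continuity_bound_general
    {X Y : Type*} [TopologicalSpace X] [PolishSpace X] [MeasurableSpace X] [BorelSpace X]
    [TopologicalSpace Y] [PolishSpace Y] [MeasurableSpace Y] [BorelSpace Y]
    (p : ℝ) (hp : 1 ≤ p)
    (d : X × Y → X × Y → ℝ≥0∞)
    (hd_lsc : LowerSemicontinuous (Function.uncurry d))
    (hd_symm : ∀ z₁ z₂, d z₁ z₂ = d z₂ z₁)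
    (hd_triangle : ∀ z₁ z₂ z₃, d z₁ z₃ ≤ d z₁ z₂ + d z₂ z₃)
    (c : X × Y → X × Y → ℝ≥0∞) (hc : ∀ z₁ z₂, c z₁ z₂ = d z₁ z₂ ^ p)
    (γ γ' : Measure (X × Y)) [IsProbabilityMeasure γ] [IsProbabilityMeasure γ'] :
    max (tdep c γ ^ (1 / p) - tdep c γ' ^ (1 / p))
        (tdep c γ' ^ (1 / p) - tdep c γ ^ (1 / p))
      ≤ otCost c γ γ' ^ (1 / p)
        + otCost c ((γ.map Prod.fst).prod (γ.map Prod.snd))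
            ((γ'.map Prod.fst).prod (γ'.map Prod.snd)) ^ (1 / p) := by
  obtain rfl : c = fun a b => d a b ^ p := funext₂ hc
  have : Nonempty (X × Y) := nonempty_of_isProbabilityMeasure γ
  exact max_tsub_wasserstein_le hp hd_lsc.measurable hd_symm hd_triangle _ _ _ _

/-- For costs `c = d^p` given by the `p`-th power of a lower
semicontinuous pseudo-metric `d` on `X × Y` with `p ≥ 1`, the transport dependency
satisfies the continuity bound
`|τ(γ)^{1/p} − τ(γ')^{1/p}| ≤ T_c(γ, γ')^{1/p} + T_c(μ ⊗ ν, μ' ⊗ ν')^{1/p}`. -/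
theorem tdep_rpow_continuity_bound
    {X Y : Type*} [TopologicalSpace X] [PolishSpace X] [MeasurableSpace X] [BorelSpace X]
    [TopologicalSpace Y] [PolishSpace Y] [MeasurableSpace Y] [BorelSpace Y]
    (p : ℝ) (hp : 1 ≤ p)
    (d : X × Y → X × Y → ℝ≥0∞)
    (hd_lsc : LowerSemicontinuous (Function.uncurry d))
    (hd_symm : ∀ z₁ z₂, d z₁ z₂ = d z₂ z₁)
    (hd_diag : ∀ z, d z z = 0)
    (hd_triangle : ∀ z₁ z₂ z₃, d z₁ z₃ ≤ d z₁ z₂ + d z₂ z₃)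
    (c : X × Y → X × Y → ℝ≥0∞) (hc : ∀ z₁ z₂, c z₁ z₂ = d z₁ z₂ ^ p)
    (γ γ' : Measure (X × Y)) [IsProbabilityMeasure γ] [IsProbabilityMeasure γ']
    (hfin : tdep c γ ≠ ∞) (hfin' : tdep c γ' ≠ ∞) :
    max (tdep c γ ^ (1 / p) - tdep c γ' ^ (1 / p))
        (tdep c γ' ^ (1 / p) - tdep c γ ^ (1 / p))
      ≤ otCost c γ γ' ^ (1 / p)
        + otCost c ((γ.map Prod.fst).prod (γ.map Prod.snd))
            ((γ'.map Prod.fst).prod (γ'.map Prod.snd)) ^ (1 / p) :=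
  tdep_rpow_continuity_bound_general p hp d hd_lsc hd_symm hd_triangle c hc γ γ'
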